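/- arXiv:0911.1724 — 2 statements merged into one kernel-verified Lean document; each statement's English description precedes it below -/
import Mathlib

section
/- Let H be a self-adjoint operator on ℂ^D with pairwise distinct eigenvalues E₁,…,E_D and orthonormal eigenbasis φ₁,…,φ_D, let P be a linear operator on ℂ^D, and let ψ₀ = ∑_{α=1}^D c_α φ_α be any vector. Then the time average lim_{T→∞} (1/T)∫₀^T ⟨e^{−iHt} ψ₀, P e^{−iHt} ψ₀⟩ dt exists and equals ∑_{α=1}^D |c_α|² ⟨φ_α, P φ_α⟩. -/
/-!
In the eigenbasis the evolution multiplies `φ α` by the phase `exp (-i E α t)`, so the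
expectation value is the trigonometric polynomial
`∑ α β, conj (c α) * c β * ⟪φ α, P (φ β)⟫ * exp (i (E α - E β) t)`.
The time average of `exp (i ω t)` is `1` for `ω = 0` and `0` otherwise, since for `ω ≠ 0` its
integral over `[0, T]` stays bounded; as the eigenvalues are distinct, only the diagonal
terms `α = β` survive.
-/

open MeasureTheory Filter Complex
open scoped InnerProductSpace

theorem NormedSpace.exp_apply_of_apply_eq_smul {𝕂 V : Type*} [RCLike 𝕂] [NormedAddCommGroup V]
    [NormedSpace 𝕂 V] [CompleteSpace V] {A : V →L[𝕂] V} {μ : 𝕂} {v : V}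
    (hv : A v = μ • v) : NormedSpace.exp A v = NormedSpace.exp μ • v := by
  have hpow : ∀ n : ℕ, (A ^ n) v = μ ^ n • v := by
    intro n
    induction n with
    | zero => simp
    | succ n ih => rw [pow_succ, mul_apply_eq_comp, hv, map_smul, ih, smul_smul, pow_succ']
  have hA := (NormedSpace.exp_series_hasSum_exp' (𝕂 := 𝕂) A).mapL (ContinuousLinearMap.apply 𝕂 V v)
  have hμ := (NormedSpace.exp_series_hasSum_exp' (𝕂 := 𝕂) μ).smul_const v
  refine hA.unique ?_
  convert hμ using 2 with n
  simp [hpow, smul_smul]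

theorem NormedSpace.exp_apply_sum_smul_of_apply_eq_smul {𝕂 V ι : Type*} [RCLike 𝕂]
    [NormedAddCommGroup V] [NormedSpace 𝕂 V] [CompleteSpace V] [Fintype ι] {A : V →L[𝕂] V}
    {μ : ι → 𝕂} {v : ι → V}
    (hv : ∀ i, A (v i) = μ i • v i) (c : ι → 𝕂) :
    NormedSpace.exp A (∑ i, c i • v i) = ∑ i, (NormedSpace.exp (μ i) * c i) • v i := by
  simp only [map_sum, map_smul, NormedSpace.exp_apply_of_apply_eq_smul (hv _), smul_smul, mul_comm]

theorem inner_sum_smul_map_sum_smul {𝕜 V ι : Type*} [RCLike 𝕜] [NormedAddCommGroup V]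
    [InnerProductSpace 𝕜 V] [Fintype ι] {F : Type*} [FunLike F V V] [LinearMapClass F 𝕜 V V]
    (P : F) (v : ι → V) (x y : ι → 𝕜) :
    ⟪∑ i, x i • v i, P (∑ j, y j • v j)⟫_𝕜 =
      ∑ i, ∑ j, (starRingEnd 𝕜) (x i) * y j * ⟪v i, P (v j)⟫_𝕜 := by
  rw [map_sum, sum_inner]
  simp only [map_smul, inner_smul_left, inner_sum, inner_smul_right]
  exact Finset.sum_congr rfl fun i _ => Finset.sum_congr rfl fun j _ => by ring

theorem tendsto_inv_mul_integral_exp_ofReal_mul_I (ω : ℝ) :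
    Tendsto (fun T : ℝ => (T : ℂ)⁻¹ * ∫ t in (0:ℝ)..T, Complex.exp (ω * t * I)) atTop
      (nhds (if ω = 0 then 1 else 0)) := by
  split_ifs with hω
  · refine tendsto_const_nhds.congr' ?_
    filter_upwards [eventually_ne_atTop 0] with T hT
    simp [hω, hT]
  · have hωI : (ω : ℂ) * I ≠ 0 := mul_ne_zero (by exact_mod_cast hω) I_ne_zero
    have hinv : Tendsto (fun T : ℝ => (T : ℂ)⁻¹) atTop (nhds 0) := by
      simpa [Function.comp_def] using (continuous_ofReal.tendsto 0).comp tendsto_inv_atTop_zero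
    refine hinv.zero_mul_isBoundedUnder_le
      ⟨2 / ‖(ω : ℂ) * I‖, eventually_map.2 <| .of_forall fun T => ?_⟩
    have hexp : ∀ s : ℝ, ‖Complex.exp (ω * I * s)‖ = 1 := fun s => by
      rw [mul_right_comm, ← ofReal_mul]
      exact norm_exp_ofReal_mul_I _
    simp only [Function.comp_apply, mul_right_comm _ _ I]
    rw [integral_exp_mul_complex hωI, norm_div]
    gcongr
    calc _ ≤ ‖Complex.exp (ω * I * T)‖ + ‖Complex.exp (ω * I * (0:ℝ))‖ := norm_sub_le _ _
      _ = 2 := by rw [hexp, hexp]; norm_num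

theorem tendsto_inv_mul_integral_sum_mul_exp {ι : Type*} [Fintype ι] (a : ι → ℂ) (ω : ι → ℝ) :
    Tendsto (fun T : ℝ => (T : ℂ)⁻¹ * ∫ t in (0:ℝ)..T, ∑ i, a i * Complex.exp (ω i * t * I))
      atTop (nhds (∑ i, if ω i = 0 then a i else 0)) := by
  have hint : ∀ T : ℝ, (T : ℂ)⁻¹ * ∫ t in (0:ℝ)..T, ∑ i, a i * Complex.exp (ω i * t * I) =
      ∑ i, a i * ((T : ℂ)⁻¹ * ∫ t in (0:ℝ)..T, Complex.exp (ω i * t * I)) := fun T => by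
    rw [intervalIntegral.integral_finsetSum fun i _ => by
      apply Continuous.intervalIntegrable; fun_prop]
    simp only [intervalIntegral.integral_const_mul, Finset.mul_sum, mul_left_comm]
  simp only [hint]
  refine tendsto_finsetSum _ fun i _ => ?_
  simpa using (tendsto_inv_mul_integral_exp_ofReal_mul_I (ω i)).const_mul (a i)

theorem stmt3_general (D : ℕ)
    (H P : EuclideanSpace ℂ (Fin D) →L[ℂ] EuclideanSpace ℂ (Fin D))
    (E : Fin D → ℝ) (hE : Function.Injective E)
    (φ : Fin D → EuclideanSpace ℂ (Fin D))
    (heig : ∀ α, H (φ α) = (E α : ℂ) • φ α)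
    (c : Fin D → ℂ) :
    Tendsto
      (fun T : ℝ => (T : ℂ)⁻¹ *
        ∫ t in (0:ℝ)..T,
          (⟪NormedSpace.exp ((-(Complex.I * t)) • H) (∑ α, c α • φ α),
            P (NormedSpace.exp ((-(Complex.I * t)) • H) (∑ α, c α • φ α))⟫_ℂ))
      atTop
      (nhds (∑ α, (‖c α‖^2 : ℂ) * ⟪φ α, P (φ α)⟫_ℂ)) := by
  have hevol : ∀ t : ℝ, NormedSpace.exp ((-(I * t)) • H) (∑ α, c α • φ α) =
      ∑ α, (Complex.exp (-(I * t) * E α) * c α) • φ α := fun t => by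
    rw [exp_eq_exp_ℂ]
    exact NormedSpace.exp_apply_sum_smul_of_apply_eq_smul (fun α => by
      rw [smul_apply, heig, smul_smul]) c
  have hphase : ∀ (t : ℝ) (α β : Fin D),
      (starRingEnd ℂ) (Complex.exp (-(I * t) * E α) * c α) *
        (Complex.exp (-(I * t) * E β) * c β) =
        (starRingEnd ℂ) (c α) * c β * Complex.exp (((E α - E β : ℝ) : ℂ) * t * I) := by
    intro t α β
    have hexponent : (starRingEnd ℂ) (-(I * t) * E α) + -(I * t) * E β =
        ((E α - E β : ℝ) : ℂ) * t * I := by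
      simp only [map_mul, map_neg, conj_I, conj_ofReal, ofReal_sub]
      ring
    rw [map_mul, ← Complex.exp_conj, mul_mul_mul_comm, ← Complex.exp_add, hexponent]
    ring
  have hexpand : ∀ t : ℝ, ⟪NormedSpace.exp ((-(I * t)) • H) (∑ α, c α • φ α),
      P (NormedSpace.exp ((-(I * t)) • H) (∑ α, c α • φ α))⟫_ℂ =
      ∑ p : Fin D × Fin D, (starRingEnd ℂ) (c p.1) * c p.2 * ⟪φ p.1, P (φ p.2)⟫_ℂ *
        Complex.exp (((E p.1 - E p.2 : ℝ) : ℂ) * t * I) := fun t => by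
    rw [hevol, inner_sum_smul_map_sum_smul, Fintype.sum_prod_type]
    simp only [hphase, mul_right_comm _ (Complex.exp _)]
  simp only [hexpand]
  convert tendsto_inv_mul_integral_sum_mul_exp _ _ using 2
  rw [Fintype.sum_prod_type]
  simp only [sub_eq_zero, hE.eq_iff, Finset.sum_ite_eq, Finset.mem_univ, if_true, conj_mul']

/-- for a self-adjoint operator `H` on `ℂ^D` with pairwise distinct
eigenvalues `E₁,…,E_D` and orthonormal eigenbasis `φ₁,…,φ_D`, any operator `P`, and any
vector `ψ₀ = ∑ c_α φ_α`, the time average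
`lim_{T→∞} (1/T)∫₀^T ⟨e^{−iHt}ψ₀, P e^{−iHt}ψ₀⟩ dt` exists and equals
`∑_α |c_α|² ⟨φ_α, P φ_α⟩`. -/
theorem stmt3 (D : ℕ) (hD : 0 < D)
    (H P : EuclideanSpace ℂ (Fin D) →L[ℂ] EuclideanSpace ℂ (Fin D))
    (hH : IsSelfAdjoint H)
    (E : Fin D → ℝ) (hE : Function.Injective E)
    (φ : Fin D → EuclideanSpace ℂ (Fin D))
    (hON : Orthonormal ℂ φ)
    (heig : ∀ α, H (φ α) = (E α : ℂ) • φ α)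
    (c : Fin D → ℂ) :
    Tendsto
      (fun T : ℝ => (T : ℂ)⁻¹ *
        ∫ t in (0:ℝ)..T,
          (⟪NormedSpace.exp ((-(Complex.I * t)) • H) (∑ α, c α • φ α),
            P (NormedSpace.exp ((-(Complex.I * t)) • H) (∑ α, c α • φ α))⟫_ℂ))
      atTop
      (nhds (∑ α, (‖c α‖^2 : ℂ) * ⟪φ α, P (φ α)⟫_ℂ)) :=
  stmt3_general D H P E hE φ heig c
end

section
/- Let H be a self-adjoint operator on a finite-dimensional complex inner product space, let P be an orthogonal projection, let E ∈ ℝ, let φ₁ be a unit vector with H φ₁ = E φ₁, and let φ₀ be a unit vector with ⟨φ₀, P φ₀⟩ = 0. Then for every t ∈ ℝ, ⟨e^{−iHt} φ₀, P e^{−iHt} φ₀⟩ ≤ 4·‖φ₀ − φ₁‖; in particular, if φ₀ is close to an eigenvector of H that is orthogonal to the range of P, then the evolved state e^{−iHt}φ₀ stays nearly orthogonal to the range of P uniformly in t and never approaches thermal equilibrium. -/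
/-!
The evolution `U = e^{-iHt}` is unitary and only multiplies `φ₁` by a phase, while `P φ₀ = 0`
because `⟪φ₀, P φ₀⟫ = ‖P φ₀‖²`. Writing `U φ₀ = U (φ₀ - φ₁) + U φ₁` and using `‖P‖ ≤ 1`,
`‖P U φ₀‖ ≤ ‖φ₀ - φ₁‖ + ‖P φ₁‖ = ‖φ₀ - φ₁‖ + ‖P (φ₁ - φ₀)‖ ≤ 2 ‖φ₀ - φ₁‖`.
Finally `⟪U φ₀, P U φ₀⟫ = ‖P U φ₀‖² ≤ ‖P U φ₀‖`, since `‖U φ₀‖ = 1`.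
-/

open Complex
open scoped InnerProductSpace

section Exponential

variable {𝕂 E : Type*} [RCLike 𝕂] [NormedAddCommGroup E] [NormedSpace 𝕂 E] [CompleteSpace E]

theorem ContinuousLinearMap.exp_apply_of_apply_eq_smul {A : E →L[𝕂] E} {c : 𝕂} {x : E}
    (h : A x = c • x) : NormedSpace.exp A x = NormedSpace.exp c • x := by
  have hpow (n : ℕ) : (A ^ n) x = c ^ n • x := by
    induction n with
    | zero => simp
    | succ n ih => rw [pow_succ, mul_apply_eq_comp, h, map_smul, ih, smul_smul, ← pow_succ']
  have hA := (NormedSpace.exp_series_hasSum_exp' (𝕂 := 𝕂) A).mapL (apply 𝕂 E x)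
  have hc := (NormedSpace.exp_series_hasSum_exp' (𝕂 := 𝕂) c).smul_const x
  simp only [apply_apply, smul_apply, hpow, smul_smul, smul_eq_mul] at hA hc
  exact hA.unique hc

end Exponential

theorem IsSelfAdjoint.exp_neg_I_mul_smul_mem_unitary {E : Type*} [NormedAddCommGroup E]
    [InnerProductSpace ℂ E] [CompleteSpace E] {H : E →L[ℂ] E} (hH : IsSelfAdjoint H) (t : ℝ) :
    NormedSpace.exp ((-(I * t)) • H) ∈ unitary (E →L[ℂ] E) := by
  let : NormedAlgebra ℚ (E →L[ℂ] E) := .restrictScalars ℚ ℂ _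
  refine NormedSpace.exp_mem_unitary_of_mem_skewAdjoint (IsSelfAdjoint.smul_mem_skewAdjoint ?_ hH)
  simp [skewAdjoint.mem_iff, conj_I]

namespace IsStarProjection

variable {𝕜 E : Type*} [RCLike 𝕜] [NormedAddCommGroup E] [InnerProductSpace 𝕜 E]
  [CompleteSpace E] {P : E →L[𝕜] E}

theorem inner_apply_self (hP : IsStarProjection P) (x : E) :
    ⟪x, P x⟫_𝕜 = ⟪P x, P x⟫_𝕜 := by
  conv_lhs => rw [← hP.isIdempotentElem.eq, mul_apply_eq_comp]
  rw [← P.adjoint_inner_left, ← ContinuousLinearMap.star_eq_adjoint, hP.isSelfAdjoint.star_eq]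

theorem re_inner_apply_self (hP : IsStarProjection P) (x : E) :
    RCLike.re ⟪x, P x⟫_𝕜 = ‖P x‖ ^ 2 := by
  rw [hP.inner_apply_self, inner_self_eq_norm_sq]

theorem apply_eq_zero_of_inner_apply_self_eq_zero (hP : IsStarProjection P) {x : E}
    (hx : ⟪x, P x⟫_𝕜 = 0) : P x = 0 :=
  inner_self_eq_zero.mp (hP.inner_apply_self x ▸ hx)

theorem norm_apply_le (hP : IsStarProjection P) (x : E) : ‖P x‖ ≤ ‖x‖ :=
  (P.le_of_opNorm_le (hP.norm_le P) x).trans_eq (one_mul _)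

theorem norm_apply_unitary_apply_le (hP : IsStarProjection P) {U : E →L[𝕜] E}
    (hU : U ∈ unitary (E →L[𝕜] E)) {ζ : 𝕜} (hζ : ‖ζ‖ = 1) {φ₀ φ₁ : E} (hφ₁ : U φ₁ = ζ • φ₁)
    (hφ₀ : P φ₀ = 0) : ‖P (U φ₀)‖ ≤ 2 * ‖φ₀ - φ₁‖ := by
  have hfar : ‖P (U (φ₀ - φ₁))‖ ≤ ‖φ₀ - φ₁‖ :=
    (hP.norm_apply_le _).trans_eq (ContinuousLinearMap.norm_map_of_mem_unitary hU _)
  have hnear : ‖P (U φ₁)‖ ≤ ‖φ₀ - φ₁‖ := by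
    rw [hφ₁, map_smul, norm_smul, hζ, one_mul, ← norm_neg, ← zero_sub, ← hφ₀, ← map_sub]
    exact hP.norm_apply_le _
  calc ‖P (U φ₀)‖ = ‖P (U (φ₀ - φ₁)) + P (U φ₁)‖ := by rw [← map_add, ← map_add, sub_add_cancel]
    _ ≤ ‖φ₀ - φ₁‖ + ‖φ₀ - φ₁‖ := (norm_add_le _ _).trans (add_le_add hfar hnear)
    _ = 2 * ‖φ₀ - φ₁‖ := (two_mul _).symm

end IsStarProjection

theorem stmt15_general {V : Type*} [NormedAddCommGroup V] [InnerProductSpace ℂ V]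
    [FiniteDimensional ℂ V]
    (H P : V →L[ℂ] V) (hH : IsSelfAdjoint H)
    (hP : IsSelfAdjoint P) (hP2 : P ∘L P = P)
    (E : ℝ) (φ₁ : V) (heig : H φ₁ = (E : ℂ) • φ₁)
    (φ₀ : V) (hφ₀ : ‖φ₀‖ = 1) (horth : ⟪φ₀, P φ₀⟫_ℂ = 0) :
    ∀ t : ℝ,
      (⟪NormedSpace.exp ((-(Complex.I * t)) • H) φ₀,
        P (NormedSpace.exp ((-(Complex.I * t)) • H) φ₀)⟫_ℂ).re ≤ 4 * ‖φ₀ - φ₁‖ := by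
  intro t
  set U := NormedSpace.exp ((-(I * t)) • H)
  have hU : U ∈ unitary (V →L[ℂ] V) := hH.exp_neg_I_mul_smul_mem_unitary t
  have hPproj : IsStarProjection P := ⟨hP2, hP⟩
  have hUφ₁ : U φ₁ = NormedSpace.exp (-(I * t) * E) • φ₁ :=
    ContinuousLinearMap.exp_apply_of_apply_eq_smul (by rw [smul_apply, heig, smul_smul])
  have hphase : ‖NormedSpace.exp (-(I * t) * E)‖ = 1 := by
    rw [← Complex.exp_eq_exp_ℂ, show -(I * t) * E = ((-(t * E) : ℝ) : ℂ) * I by push_cast; ring]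
    exact norm_exp_ofReal_mul_I _
  have hclose := hPproj.norm_apply_unitary_apply_le hU hphase hUφ₁
    (hPproj.apply_eq_zero_of_inner_apply_self_eq_zero horth)
  have hle_one : ‖P (U φ₀)‖ ≤ 1 :=
    (hPproj.norm_apply_le _).trans_eq ((ContinuousLinearMap.norm_map_of_mem_unitary hU φ₀).trans hφ₀)
  rw [← RCLike.re_to_complex, hPproj.re_inner_apply_self]
  calc ‖P (U φ₀)‖ ^ 2 ≤ ‖P (U φ₀)‖ := pow_le_of_le_one (norm_nonneg _) hle_one two_ne_zero
    _ ≤ 2 * ‖φ₀ - φ₁‖ := hclose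
    _ ≤ 4 * ‖φ₀ - φ₁‖ := by linarith [norm_nonneg (φ₀ - φ₁)]

/-- let `H` be self-adjoint, `P` an orthogonal projection, `φ₁` a unit
eigenvector of `H` (`Hφ₁ = Eφ₁`) and `φ₀` a unit vector with `⟨φ₀, Pφ₀⟩ = 0`. Then for
every `t`, `⟨e^{−iHt}φ₀, P e^{−iHt}φ₀⟩ ≤ 4‖φ₀ − φ₁‖`: the evolved state stays nearly
orthogonal to the range of `P` uniformly in `t`. -/
theorem stmt15 {V : Type*} [NormedAddCommGroup V] [InnerProductSpace ℂ V]
    [FiniteDimensional ℂ V]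
    (H P : V →L[ℂ] V) (hH : IsSelfAdjoint H)
    (hP : IsSelfAdjoint P) (hP2 : P ∘L P = P)
    (E : ℝ) (φ₁ : V) (hφ₁ : ‖φ₁‖ = 1) (heig : H φ₁ = (E : ℂ) • φ₁)
    (φ₀ : V) (hφ₀ : ‖φ₀‖ = 1) (horth : ⟪φ₀, P φ₀⟫_ℂ = 0) :
    ∀ t : ℝ,
      (⟪NormedSpace.exp ((-(Complex.I * t)) • H) φ₀,
        P (NormedSpace.exp ((-(Complex.I * t)) • H) φ₀)⟫_ℂ).re ≤ 4 * ‖φ₀ - φ₁‖ :=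
  stmt15_general H P hH hP hP2 E φ₁ heig φ₀ hφ₀ horth
end
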